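/- Let V be a real inner product space and v₁, …, v_k ∈ V linearly independent vectors that are pairwise obtuse, i.e. ⟨vᵢ, vⱼ⟩ ≤ 0 for all i ≠ j. Let u = ∑ᵢ cᵢ vᵢ be the unique element of span{v₁,…,v_k} with ⟨u, vⱼ⟩ = 1 for all j. Then cᵢ ≥ 0 for every i. -/
import Mathlib


open scoped RealInnerProductSpace

/-- Let `v₁, …, v_k` be linearly independent, pairwise obtuse vectors in a real inner
product space, and let `u = ∑ cᵢ vᵢ` satisfy `⟪u, vⱼ⟫ = 1` for all `j`.  Then all `cᵢ ≥ 0`. -/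
theorem stmt6 {V : Type*} [NormedAddCommGroup V] [InnerProductSpace ℝ V]
    {k : ℕ} (v : Fin k → V) (hli : LinearIndependent ℝ v)
    (hobt : ∀ i j, i ≠ j → ⟪v i, v j⟫ ≤ 0)
    (c : Fin k → ℝ)
    (hu : ∀ j, ⟪∑ i, c i • v i, v j⟫ = 1) :
    ∀ i, 0 ≤ c i := by
  by_contra h
  push_neg at h
  obtain ⟨i₀, hi₀⟩ := h
  set u := ∑ i, c i • v i with hudef
  set P : Finset (Fin k) := Finset.univ.filter (fun i => c i < 0) with hP
  have hi₀P : i₀ ∈ P := by simp [hP, hi₀]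
  set w := ∑ i ∈ P, c i • v i with hw
  have huw : ⟪u, w⟫ = ∑ j ∈ P, c j := by
    rw [hw, inner_sum]
    exact Finset.sum_congr rfl fun j hj => by rw [real_inner_smul_right, hu j, mul_one]
  have hneg : ⟪u, w⟫ < 0 := by
    rw [huw]
    refine Finset.sum_neg (fun j hj => ?_) ⟨i₀, hi₀P⟩
    simpa [hP] using hj
  have hsplit : u = w + ∑ i ∈ Pᶜ, c i • v i := by
    rw [hw, hudef, ← Finset.sum_add_sum_compl P]
  have hrest : 0 ≤ ⟪∑ i ∈ Pᶜ, c i • v i, w⟫ := by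
    rw [sum_inner]
    refine Finset.sum_nonneg fun i hi => ?_
    rw [real_inner_smul_left]
    have hci : 0 ≤ c i := by
      simp only [hP, Finset.mem_compl, Finset.mem_filter, Finset.mem_univ, true_and,
        not_lt] at hi
      exact hi
    refine mul_nonneg hci ?_
    rw [hw, inner_sum]
    refine Finset.sum_nonneg fun j hj => ?_
    rw [real_inner_smul_right]
    have hij : i ≠ j := by
      rintro rfl
      exact (Finset.mem_compl.mp hi) hj
    have hcj : c j < 0 := by simpa [hP] using hj
    have := hobt i j hij
    nlinarith
  have : 0 ≤ ⟪u, w⟫ := by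
    rw [hsplit, inner_add_left]
    have := real_inner_self_nonneg (x := w)
    linarith
  linarith
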